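/- Let I ⊆ {0,1,…,n−1} and let Y_I = {w ∈ B_n : Des(w) = I} be the descent class of I. (1) If I = {0 < p_1 < p_2 < ⋯ < p_k}, then the largest element of Y_I in the weak order is ζ_I = (−p_1,…,−1, −p_2,…,−(p_1+1), …, −n,…,−(n−p_k)). (2) If I = {p_1 < p_2 < ⋯ < p_k} with p_1 > 0, then the largest element of Y_I in the weak order is ζ_I = (1,…,p_1, −p_2,…,−(p_1+1), …, −n,…,−(n−p_k)). -/

import Mathlib

open Finset

open scoped Classical

/-- The hyperoctahedral group `𝔅ₙ`, realized as the set of those permutations `w` of `ℤ`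
that satisfy `w (-i) = - w i` for all `i` and fix every integer of absolute value `> n`.
One-line notation: `w₁ ⋯ w_n` with `w_i = w i` for `1 ≤ i ≤ n`. -/
def SignedPerm (n : ℕ) : Set (Equiv.Perm ℤ) :=
  {w | (∀ i : ℤ, w (-i) = - w i) ∧ (∀ i : ℤ, (n : ℤ) < |i| → w i = i)}

/-- The inversion set `Inv(w) = {(i,j) : 1 ≤ i < j ≤ n, w_i > w_j}`. -/
noncomputable def InvSet (n : ℕ) (w : Equiv.Perm ℤ) : Finset (ℤ × ℤ) :=
  ((Finset.Icc (1 : ℤ) (n : ℤ)) ×ˢ (Finset.Icc (1 : ℤ) (n : ℤ))).filter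
    fun p => p.1 < p.2 ∧ w p.2 < w p.1

/-- The set of negative indices `Nega(w) = {i ∈ [n] : w_i < 0}`. -/
noncomputable def NegaSet (n : ℕ) (w : Equiv.Perm ℤ) : Finset ℤ :=
  (Finset.Icc (1 : ℤ) (n : ℤ)).filter fun i => w i < 0

/-- The negative sum pair set `Nsp(w) = {(i,j) : 1 ≤ i < j ≤ n, w_i + w_j < 0}`. -/
noncomputable def NspSet (n : ℕ) (w : Equiv.Perm ℤ) : Finset (ℤ × ℤ) :=
  ((Finset.Icc (1 : ℤ) (n : ℤ)) ×ˢ (Finset.Icc (1 : ℤ) (n : ℤ))).filter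
    fun p => p.1 < p.2 ∧ w p.1 + w p.2 < 0

/-- The Coxeter length of `w ∈ 𝔅ₙ`: `ℓ(w) = #Inv(w) + #Nega(w) + #Nsp(w)`. -/
noncomputable def blen (n : ℕ) (w : Equiv.Perm ℤ) : ℕ :=
  (InvSet n w).card + (NegaSet n w).card + (NspSet n w).card

/-- The left weak order on `𝔅ₙ`: `u ≤ v` iff `ℓ(v) = ℓ(u) + ℓ(v * u⁻¹)`. -/
def wle (n : ℕ) (u v : Equiv.Perm ℤ) : Prop :=
  blen n v = blen n u + blen n (v * u⁻¹)

/-- The Coxeter generators of `𝔅ₙ`: `s₀ = (1,-1)` and `sᵢ = (i,i+1)(-i,-(i+1))` for `i ≥ 1`. -/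
def sB (i : ℕ) : Equiv.Perm ℤ :=
  if i = 0 then Equiv.swap 1 (-1)
  else Equiv.swap (i : ℤ) ((i : ℤ) + 1) * Equiv.swap (-(i : ℤ)) (-((i : ℤ) + 1))

/-- `a[p] = a + p` if `a > 0`, `a - p` if `a < 0` (and `0 ↦ 0`). -/
def shiftFun (p : ℕ) (b : ℤ) : ℤ :=
  if 0 < b then b + (p : ℤ) else if b < 0 then b - (p : ℤ) else 0

/-- `w` is the shifted product `u × v ∈ 𝔅_{p+q}` of `u ∈ 𝔅_p` and `v ∈ 𝔅_q`:
its one-line notation is `(u₁, …, u_p, v₁[p], …, v_q[p])`. -/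
def IsSProd (p q : ℕ) (u v w : Equiv.Perm ℤ) : Prop :=
  w ∈ SignedPerm (p + q) ∧
  (∀ a : ℤ, 1 ≤ a → a ≤ (p : ℤ) → w a = u a) ∧
  (∀ a : ℤ, (p : ℤ) < a → a ≤ (p : ℤ) + (q : ℤ) → w a = shiftFun p (v (a - (p : ℤ))))

/-- `ξ` is a `(p,q)`-shuffle: an element of `𝔅_{p+q}` with positive entries (a permutation)
that is increasing on each of the blocks `[1,p]` and `[p+1,p+q]`. -/
def IsShuffle (p q : ℕ) (ξ : Equiv.Perm ℤ) : Prop :=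
  ξ ∈ SignedPerm (p + q) ∧
  (∀ a : ℤ, 1 ≤ a → a ≤ (p : ℤ) + (q : ℤ) → 0 < ξ a) ∧
  (∀ a b : ℤ, 1 ≤ a → a < b → b ≤ (p : ℤ) → ξ a < ξ b) ∧
  (∀ a b : ℤ, (p : ℤ) < a → a < b → b ≤ (p : ℤ) + (q : ℤ) → ξ a < ξ b)

/-- `w` is the standard signed permutation `sts(a₁ ⋯ a_m)` of the word `a₁ ⋯ a_m = a 1, …, a m`
(of nonzero integers): the unique `w ∈ 𝔅_m` with the same negative index set and
`|w_i| < |w_j| ↔ |a_i| ≤ |a_j|` for `1 ≤ i < j ≤ m`. -/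
def IsSts (m : ℕ) (a : ℤ → ℤ) (w : Equiv.Perm ℤ) : Prop :=
  w ∈ SignedPerm m ∧
  (∀ i : ℤ, 1 ≤ i → i ≤ (m : ℤ) → (w i < 0 ↔ a i < 0)) ∧
  (∀ i j : ℤ, 1 ≤ i → i < j → j ≤ (m : ℤ) → (|w i| < |w j| ↔ |a i| ≤ |a j|))

/-- The standard signed permutation of a word, as a function. -/
noncomputable def sts (m : ℕ) (a : ℤ → ℤ) : Equiv.Perm ℤ :=
  if h : ∃ w, IsSts m a w then h.choose else 1

/-- Descent set of `w ∈ 𝔅ₙ`: `Des(w) = {i ∈ [0,n-1] : w_i > w_{i+1}}` with `w₀ = 0`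
(note `w 0 = 0` holds automatically). -/
def DesSet (n : ℕ) (w : Equiv.Perm ℤ) : Finset ℕ :=
  (Finset.range n).filter fun i => w ((i : ℤ) + 1) < w (i : ℤ)

/-- Global descent set of `u ∈ 𝔅ₙ`. -/
noncomputable def GDesSet (n : ℕ) (u : Equiv.Perm ℤ) : Finset ℕ :=
  (Finset.Ico 1 n).filter fun i =>
    ∀ j k : ℤ, 1 ≤ j → j ≤ (i : ℤ) → (i : ℤ) < k → k ≤ (n : ℤ) → u k < u j

/-- `m` is the meet (greatest lower bound) of `x` and `y` within `S`, w.r.t. the weak order. -/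
def IsMeetIn (n : ℕ) (S : Set (Equiv.Perm ℤ)) (x y m : Equiv.Perm ℤ) : Prop :=
  m ∈ S ∧ wle n m x ∧ wle n m y ∧ ∀ z ∈ S, wle n z x → wle n z y → wle n z m

/-- `j` is the join (least upper bound) of `x` and `y` within `S`, w.r.t. the weak order. -/
def IsJoinIn (n : ℕ) (S : Set (Equiv.Perm ℤ)) (x y j : Equiv.Perm ℤ) : Prop :=
  j ∈ S ∧ wle n x j ∧ wle n y j ∧ ∀ z ∈ S, wle n x z → wle n y z → wle n j z

/-- The set `𝔅_p × 𝔅_{q,K} ⊆ 𝔅_{p+q}` of shifted products `u × v` with `u ∈ 𝔅_p`,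
`v ∈ 𝔅_q`, `Nega(v) = K`. -/
def SProdComp (p q : ℕ) (K : Finset ℤ) : Set (Equiv.Perm ℤ) :=
  {w | ∃ u v : Equiv.Perm ℤ, u ∈ SignedPerm p ∧ v ∈ SignedPerm q ∧ NegaSet q v = K ∧
        IsSProd p q u v w}

/-- `w` is the iterated shifted product `u⁽¹⁾ × ⋯ × u⁽ᵏ⁾` of the list `us` of signed
permutations with block sizes given by the list `ps`. -/
def IsMultiSProd (ps : List ℕ) (us : List (Equiv.Perm ℤ)) (w : Equiv.Perm ℤ) : Prop :=
  w ∈ SignedPerm ps.sum ∧ us.length = ps.length ∧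
  ∀ i < ps.length,
    us.getD i 1 ∈ SignedPerm (ps.getD i 0) ∧
    ∀ a : ℤ, ((ps.take i).sum : ℤ) < a → a ≤ ((ps.take i).sum : ℤ) + (ps.getD i 0 : ℤ) →
      w a = shiftFun ((ps.take i).sum) ((us.getD i 1) (a - ((ps.take i).sum : ℤ)))

/-- The subset `𝔅_{p₁} × 𝔅_{p₂} × ⋯ × 𝔅_{p_k}` of `𝔅_{p₁+⋯+p_k}`. -/
def MultiProdSet (ps : List ℕ) : Set (Equiv.Perm ℤ) :=
  {w | ∃ us, IsMultiSProd ps us w}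

/-- The `(L₂,…,L_k)`-component `𝔅_{p₁} × 𝔅_{p₂,L₂} × ⋯ × 𝔅_{p_k,L_k}`, where
`Ls.getD (i-1) ∅` is the prescribed negative index set of the `(i+1)`-st factor. -/
def ComponentSet (ps : List ℕ) (Ls : List (Finset ℤ)) : Set (Equiv.Perm ℤ) :=
  {w | ∃ us, IsMultiSProd ps us w ∧
        ∀ i, 1 ≤ i → i < ps.length →
          NegaSet (ps.getD i 0) (us.getD i 1) = Ls.getD (i - 1) ∅}

/-- `ξ ∈ Sh(p₁,…,p_k)`: a permutation in `𝔅_{p₁+⋯+p_k}` (all entries positive)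
increasing on each consecutive block. -/
def IsMultiShuffle (ps : List ℕ) (ξ : Equiv.Perm ℤ) : Prop :=
  ξ ∈ SignedPerm ps.sum ∧
  (∀ a : ℤ, 1 ≤ a → a ≤ (ps.sum : ℤ) → 0 < ξ a) ∧
  ∀ i < ps.length, ∀ a b : ℤ,
    ((ps.take i).sum : ℤ) < a → a < b → b ≤ ((ps.take i).sum : ℤ) + (ps.getD i 0 : ℤ) →
      ξ a < ξ b

/-!
Encode the positive roots of `Bₙ` as pairs `(i, j)`. The length `blen n w` is the number of positive
roots inverted by `w`, and if every root inverted by `u` is inverted by `v`, then `u` carries the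
roots inverted by `v` but not by `u` bijectively onto the roots inverted by `v u⁻¹`; hence
`ℓ(v) = ℓ(u) + ℓ(v u⁻¹)`. So it suffices that `ζ_I` inverts every root that some `w` with
`Des(w) = I` inverts. If `w_j < w_i` with `0 ≤ i < j`, then `w` has a descent `d ∈ [i, j)`, and
`ζ_I(j) ≤ -(d + 1) < -d ≤ ζ_I(i)`. If `w_k + w_j < 0` with `k < j` and no descent lies below `k`,
then `w_k ≥ k`, so `w_j < -k` forces a descent `d ∈ [k, j)` and `ζ_I(k) + ζ_I(j) ≤ k - (d + 1) < 0`.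
-/

namespace SignedPerm

variable {n : ℕ} {u v w : Equiv.Perm ℤ}

theorem apply_neg (hw : w ∈ SignedPerm n) (i : ℤ) : w (-i) = -w i := hw.1 i

theorem apply_zero (hw : w ∈ SignedPerm n) : w 0 = 0 := by
  have h := SignedPerm.apply_neg hw 0
  rw [neg_zero] at h
  omega

theorem apply_ne_zero (hw : w ∈ SignedPerm n) {a : ℤ} (ha : a ≠ 0) : w a ≠ 0 :=
  fun h => ha (w.injective (h.trans (SignedPerm.apply_zero hw).symm))

theorem abs_apply_le (hw : w ∈ SignedPerm n) {a : ℤ} (ha : |a| ≤ n) : |w a| ≤ n := by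
  by_contra h
  push Not at h
  rw [w.injective (hw.2 _ h)] at h
  omega

theorem inv_mem (hw : w ∈ SignedPerm n) : w⁻¹ ∈ SignedPerm n :=
  ⟨fun i => by
    rw [Equiv.Perm.inv_eq_iff_eq, SignedPerm.apply_neg hw, Equiv.Perm.coe_inv,
      Equiv.apply_symm_apply],
    fun i hi => by rw [Equiv.Perm.inv_eq_iff_eq, hw.2 i hi]⟩

theorem mul_mem (hu : u ∈ SignedPerm n) (hv : v ∈ SignedPerm n) : u * v ∈ SignedPerm n :=
  ⟨fun i => by simp only [Equiv.Perm.mul_apply, SignedPerm.apply_neg hv, SignedPerm.apply_neg hu],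
    fun i hi => by simp only [Equiv.Perm.mul_apply, hv.2 i hi, hu.2 i hi]⟩

end SignedPerm

/-- The positive roots of `Bₙ`: the pair `(i, j)` stands for `e_j - e_i`, where `e_{-k} = -e_k`,
so that `(-j, j)` is the root in the direction of `e_j`. -/
noncomputable def posRoots (n : ℕ) : Finset (ℤ × ℤ) :=
  ((Icc (-(n : ℤ)) n) ×ˢ (Icc (-(n : ℤ)) n)).filter fun p => p.1 < p.2 ∧ 0 ≤ p.1 + p.2 ∧ p.1 ≠ 0

theorem mem_posRoots {n : ℕ} {p : ℤ × ℤ} :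
    p ∈ posRoots n ↔ -(n : ℤ) ≤ p.1 ∧ p.1 < p.2 ∧ p.2 ≤ n ∧ 0 ≤ p.1 + p.2 ∧ p.1 ≠ 0 := by
  simp only [posRoots, mem_filter, mem_product, mem_Icc]
  omega

noncomputable def invRoots (n : ℕ) (w : Equiv.Perm ℤ) : Finset (ℤ × ℤ) :=
  (posRoots n).filter fun p => w p.2 < w p.1

theorem mem_invRoots {n : ℕ} {w : Equiv.Perm ℤ} {p : ℤ × ℤ} :
    p ∈ invRoots n w ↔ p ∈ posRoots n ∧ w p.2 < w p.1 := mem_filter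

/-- The positive one of the two roots `±(e_b - e_a)`. -/
def rootRep (a b : ℤ) : ℤ × ℤ :=
  if 0 ≤ a + b then (min a b, max a b) else (-max a b, -min a b)

theorem rootRep_comm (a b : ℤ) : rootRep b a = rootRep a b := by
  simp only [rootRep, min_comm, max_comm, add_comm]

theorem rootRep_neg (a b : ℤ) : rootRep (-a) (-b) = rootRep a b := by
  simp only [rootRep, max_neg_neg, min_neg_neg, neg_neg]
  split_ifs <;> ext <;> dsimp only <;> omega

theorem rootRep_of_lt {a b : ℤ} (hab : a < b) (hs : 0 ≤ a + b) : rootRep a b = (a, b) := by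
  rw [rootRep, if_pos hs, min_eq_left hab.le, max_eq_right hab.le]

theorem rootRep_mem_posRoots {n : ℕ} {a b : ℤ} (ha : |a| ≤ n) (hb : |b| ≤ n) (hab : a ≠ b)
    (ha0 : a ≠ 0) (hb0 : b ≠ 0) : rootRep a b ∈ posRoots n := by
  rw [abs_le] at ha hb
  rw [mem_posRoots, rootRep]
  rcases le_total a b with h | h
  · rw [min_eq_left h, max_eq_right h]
    split_ifs <;> dsimp only <;> omega
  · rw [min_eq_right h, max_eq_left h]
    split_ifs <;> dsimp only <;> omega

theorem rootRep_inverted_iff {n : ℕ} {x : Equiv.Perm ℤ} (hx : x ∈ SignedPerm n) {a b : ℤ}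
    (hab : a ≠ b) :
    x (rootRep a b).2 < x (rootRep a b).1 ↔ (x b < x a ↔ a < b) := by
  have hxab : x a ≠ x b := fun h => hab (x.injective h)
  simp only [rootRep]
  rcases lt_or_gt_of_ne hab with h | h
  · rw [min_eq_left h.le, max_eq_right h.le]
    split_ifs <;> simp only [SignedPerm.apply_neg hx] <;> omega
  · rw [min_eq_right h.le, max_eq_left h.le]
    split_ifs <;> simp only [SignedPerm.apply_neg hx] <;> omega

theorem rootRep_eq_or (a b : ℤ) :
    rootRep a b = (a, b) ∨ rootRep a b = (b, a) ∨ rootRep a b = (-a, -b) ∨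
      rootRep a b = (-b, -a) := by
  rcases le_total a b with h | h <;>
    simp only [rootRep, min_eq_left h, max_eq_right h, min_eq_right h, max_eq_left h] <;>
    split_ifs <;> simp

def rootAct (u : Equiv.Perm ℤ) (p : ℤ × ℤ) : ℤ × ℤ := rootRep (u p.1) (u p.2)

section rootAct

variable {n : ℕ} {u x : Equiv.Perm ℤ} {p : ℤ × ℤ}

theorem rootAct_mem (hu : u ∈ SignedPerm n) (hp : p ∈ posRoots n) : rootAct u p ∈ posRoots n := by
  rw [mem_posRoots] at hp
  refine rootRep_mem_posRoots (SignedPerm.abs_apply_le hu ?_) (SignedPerm.abs_apply_le hu ?_)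
    (fun h => absurd (u.injective h) (by omega)) (SignedPerm.apply_ne_zero hu (by omega))
    (SignedPerm.apply_ne_zero hu (by omega)) <;> rw [abs_le] <;> omega

theorem rootAct_rootRep (hu : u ∈ SignedPerm n) (a b : ℤ) :
    rootAct u (rootRep a b) = rootRep (u a) (u b) := by
  rcases rootRep_eq_or a b with h | h | h | h <;> rw [h, rootAct] <;>
    simp only [SignedPerm.apply_neg hu, rootRep_neg]
  all_goals exact rootRep_comm _ _

theorem rootAct_inv_rootAct (hu : u ∈ SignedPerm n) (hp : p ∈ posRoots n) :
    rootAct u⁻¹ (rootAct u p) = p := by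
  rw [mem_posRoots] at hp
  rw [show rootAct u p = rootRep (u p.1) (u p.2) from rfl,
    rootAct_rootRep (SignedPerm.inv_mem hu), Equiv.Perm.coe_inv, Equiv.symm_apply_apply,
    Equiv.symm_apply_apply, rootRep_of_lt hp.2.1 hp.2.2.2.1]

theorem rootAct_rootAct_inv (hu : u ∈ SignedPerm n) (hp : p ∈ posRoots n) :
    rootAct u (rootAct u⁻¹ p) = p := by
  simpa using rootAct_inv_rootAct (SignedPerm.inv_mem hu) hp

theorem mem_invRoots_mul_iff (hu : u ∈ SignedPerm n) (hx : x ∈ SignedPerm n)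
    (hp : p ∈ posRoots n) :
    p ∈ invRoots n (x * u) ↔ (rootAct u p ∈ invRoots n x ↔ p ∉ invRoots n u) := by
  have hne : p.1 ≠ p.2 := (mem_posRoots.1 hp).2.1.ne
  rw [mem_invRoots, mem_invRoots, mem_invRoots]
  simp only [hp, rootAct_mem hu hp, Equiv.Perm.mul_apply, true_and]
  rw [rootAct, rootRep_inverted_iff hx (u.injective.ne hne)]
  have := u.injective.ne hne
  omega

theorem card_invRoots_mul (hu : u ∈ SignedPerm n) (hx : x ∈ SignedPerm n)
    (hsub : invRoots n u ⊆ invRoots n (x * u)) :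
    #(invRoots n (x * u)) = #(invRoots n u) + #(invRoots n x) := by
  set T := (posRoots n).filter fun p => rootAct u p ∈ invRoots n x
  have hsplit : invRoots n (x * u) = invRoots n u ∪ T := by
    ext p
    by_cases hp : p ∈ posRoots n
    · have := mem_invRoots_mul_iff hu hx hp
      have := @hsub p
      simp only [T, mem_union, mem_filter, hp, true_and]
      tauto
    · simp [T, mem_invRoots, hp]
  have hdisj : Disjoint (invRoots n u) T := by
    refine disjoint_left.2 fun p hpu hpT => ?_
    have hp := (mem_filter.1 hpT).1
    have := (mem_invRoots_mul_iff hu hx hp).1 (hsub hpu)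
    exact (this.1 (mem_filter.1 hpT).2) hpu
  have hT : #T = #(invRoots n x) := by
    refine card_nbij' (rootAct u) (rootAct u⁻¹) (fun p hp => (mem_filter.1 hp).2)
      (fun q hq => ?_) (fun p hp => rootAct_inv_rootAct hu (mem_filter.1 hp).1)
      (fun q hq => ?_)
    · have hq := (mem_invRoots.1 hq).1
      exact mem_filter.2
        ⟨rootAct_mem (SignedPerm.inv_mem hu) hq, by rwa [rootAct_rootAct_inv hu hq]⟩
    · exact rootAct_rootAct_inv hu (mem_invRoots.1 hq).1
  rw [hsplit, card_union_of_disjoint hdisj, hT]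

end rootAct

section length

variable {n : ℕ} {u v w : Equiv.Perm ℤ}

theorem invRoots_eq_union (hw : w ∈ SignedPerm n) :
    invRoots n w = InvSet n w ∪ ((NegaSet n w).image (fun j => (-j, j)) ∪
      (NspSet n w).image (fun q => (-q.1, q.2))) := by
  ext ⟨i, j⟩
  simp only [mem_union, mem_image, mem_invRoots, mem_posRoots, InvSet, NegaSet, NspSet,
    mem_filter, mem_product, mem_Icc, Prod.mk.injEq, Prod.exists]
  constructor
  · rintro ⟨⟨h1, h2, h3, h4, h5⟩, hlt⟩
    rcases lt_or_gt_of_ne h5 with hi | hi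
    · have hwi : w i = -w (-i) := by rw [SignedPerm.apply_neg hw, neg_neg]
      right
      by_cases hij : i = -j
      · left
        subst hij
        rw [neg_neg] at hwi
        exact ⟨j, ⟨⟨by omega, h3⟩, by omega⟩, rfl, rfl⟩
      · right
        exact ⟨-i, j, ⟨⟨⟨by omega, by omega⟩, by omega, h3⟩, by omega, by omega⟩, neg_neg i, rfl⟩
    · left
      exact ⟨⟨⟨by omega, by omega⟩, by omega, h3⟩, h2, hlt⟩
  · rintro (⟨⟨⟨h1, h2⟩, h3, h4⟩, h5, h6⟩ | ⟨a, ⟨⟨h1, h2⟩, h3⟩, rfl, rfl⟩ |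
      ⟨a, b, ⟨⟨⟨h1, h2⟩, h3, h4⟩, h5, h6⟩, rfl, rfl⟩)
    · exact ⟨⟨by omega, h5, h4, by omega, by omega⟩, h6⟩
    · rw [SignedPerm.apply_neg hw]
      exact ⟨⟨by omega, by omega, h2, by omega, by omega⟩, by omega⟩
    · rw [SignedPerm.apply_neg hw]
      exact ⟨⟨by omega, by omega, h4, by omega, by omega⟩, by omega⟩

theorem blen_eq_card_invRoots (hw : w ∈ SignedPerm n) : blen n w = #(invRoots n w) := by
  have hinj₁ : Function.Injective fun j : ℤ => (-j, j) := fun a b h => (Prod.mk.inj h).2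
  have hinj₂ : Function.Injective fun q : ℤ × ℤ => (-q.1, q.2) := fun a b h => by
    simp only [Prod.mk.injEq, neg_inj] at h
    exact Prod.ext h.1 h.2
  rw [invRoots_eq_union hw, card_union_of_disjoint, card_union_of_disjoint,
    card_image_of_injective _ hinj₁, card_image_of_injective _ hinj₂, blen, add_assoc]
  · simp only [disjoint_left, mem_image, not_exists, not_and]
    rintro _ ⟨j, -, rfl⟩ q hq h
    have := (mem_filter.1 hq).2.1
    simp only [Prod.mk.injEq] at h
    omega
  · simp only [disjoint_left, mem_union, mem_image, not_or, not_exists, not_and]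
    intro p hp
    have := (mem_filter.1 hp).1
    simp only [mem_product, mem_Icc] at this
    constructor <;> rintro q hq rfl
    · have := (mem_filter.1 hq).1
      simp only [mem_Icc] at this
      omega
    · have := (mem_filter.1 hq).1
      simp only [mem_product, mem_Icc] at this
      omega

theorem wle_of_invRoots_subset (hu : u ∈ SignedPerm n) (hv : v ∈ SignedPerm n)
    (h : invRoots n u ⊆ invRoots n v) : wle n u v := by
  have hx := SignedPerm.mul_mem hv (SignedPerm.inv_mem hu)
  have hxu : v * u⁻¹ * u = v := inv_mul_cancel_right v u
  rw [wle, blen_eq_card_invRoots hu, blen_eq_card_invRoots hv, blen_eq_card_invRoots hx,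
    ← card_invRoots_mul hu hx (by rwa [hxu]), hxu]

end length

section descents

variable {n : ℕ} {w : Equiv.Perm ℤ}

theorem add_sub_le_of_no_descent {a b : ℤ} (ha : 0 ≤ a) (hab : a ≤ b) (hb : b ≤ n)
    (h : ∀ d ∈ DesSet n w, (d : ℤ) < a ∨ b ≤ d) : w a + (b - a) ≤ w b := by
  induction b, hab using Int.leInduction with
  | base => simp
  | succ b hab ih =>
    have hstep : ¬ w (b + 1) < w b := fun hlt => by
      have hmem : b.toNat ∈ DesSet n w := by
        rw [DesSet, mem_filter, mem_range, Int.toNat_of_nonneg (by omega)]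
        exact ⟨by omega, hlt⟩
      rcases h _ hmem with h' | h' <;> omega
    have hne : w (b + 1) ≠ w b := fun he => by have := w.injective he; omega
    have := ih (by omega) fun d hd => (h d hd).imp id fun h' => by omega
    omega

theorem exists_descent_of_apply_lt {a b : ℤ} (ha : 0 ≤ a) (hab : a ≤ b) (hb : b ≤ n)
    (hlt : w b < w a) : ∃ d ∈ DesSet n w, a ≤ d ∧ (d : ℤ) < b := by
  by_contra! h
  have := add_sub_le_of_no_descent ha hab hb fun d hd => by
    by_cases had : a ≤ d
    · exact Or.inr (h d hd had)
    · exact Or.inl (lt_of_not_ge had)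
  omega

theorem le_apply_of_no_descent_lt (hw : w ∈ SignedPerm n) {k : ℤ} (hk : 0 ≤ k) (hkn : k ≤ n)
    (h : ∀ d ∈ DesSet n w, k ≤ d) : k ≤ w k := by
  have := add_sub_le_of_no_descent le_rfl hk hkn fun d hd => Or.inr (h d hd)
  rw [SignedPerm.apply_zero hw] at this
  omega

end descents

theorem exists_block_bounds {n : ℕ} {I : Finset ℕ} {a : ℤ} (ha : a ≤ n)
    (hne : ∃ i ∈ I, (i : ℤ) < a) :
    ∃ lo ∈ I, (lo : ℤ) < a ∧ (∀ i ∈ I, (i : ℤ) < a → i ≤ lo) ∧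
      ∃ hi ∈ insert n I, a ≤ (hi : ℤ) ∧ ∀ i ∈ insert n I, a ≤ (i : ℤ) → hi ≤ i := by
  obtain ⟨lo, hlo, hlo_max⟩ := exists_max_image (I.filter fun i : ℕ => (i : ℤ) < a) id
    (by simpa [Finset.Nonempty] using hne)
  obtain ⟨hi, hhi, hhi_min⟩ := exists_min_image ((insert n I).filter fun i : ℕ => a ≤ (i : ℤ)) id
    ⟨n, mem_filter.2 ⟨mem_insert_self n I, ha⟩⟩
  rw [mem_filter] at hlo hhi
  exact ⟨lo, hlo.1, hlo.2, fun i hi hia => hlo_max i (mem_filter.2 ⟨hi, hia⟩), hi, hhi.1, hhi.2,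
    fun i hi hia => hhi_min i (mem_filter.2 ⟨hi, hia⟩)⟩

/-- The values of `ζ_I` at the positions `1, …, n`: the identity up to the first descent, and
`-p_{r+1}, …, -(p_r + 1)` on each block `(p_r, p_{r+1}]` between consecutive elements of
`I ∪ {n}`. -/
structure IsZeta (n : ℕ) (I : Finset ℕ) (ζ : Equiv.Perm ℤ) : Prop where
  eq_self : ∀ a : ℤ, 1 ≤ a → a ≤ (n : ℤ) → (∀ i ∈ I, a ≤ (i : ℤ)) → ζ a = a
  eq_block : ∀ a : ℤ, 1 ≤ a → a ≤ (n : ℤ) →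
    ∀ lo ∈ I, (lo : ℤ) < a → (∀ i ∈ I, (i : ℤ) < a → i ≤ lo) →
    ∀ hi ∈ insert n I, a ≤ (hi : ℤ) → (∀ i ∈ insert n I, a ≤ (i : ℤ) → hi ≤ i) →
    ζ a = -(((hi : ℤ) + (lo : ℤ) + 1) - a)

namespace IsZeta

variable {n : ℕ} {I : Finset ℕ} {ζ w : Equiv.Perm ℤ}

theorem apply_le_neg_succ (hz : IsZeta n I ζ) {a : ℤ} (ha : 1 ≤ a) (han : a ≤ n) {x : ℕ}
    (hx : x ∈ I) (hxa : (x : ℤ) < a) : ζ a ≤ -(x + 1) := by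
  obtain ⟨lo, hlo, hlo_lt, hlo_max, hi, hhi, hhi_le, hhi_min⟩ :=
    exists_block_bounds han ⟨x, hx, hxa⟩
  rw [hz.eq_block a ha han lo hlo hlo_lt hlo_max hi hhi hhi_le hhi_min]
  have := hlo_max x hx hxa
  omega

theorem neg_le_apply (hz : IsZeta n I ζ) {a : ℤ} (ha : 1 ≤ a) (han : a ≤ n)
    (hlo : ∃ i ∈ I, (i : ℤ) < a) {y : ℕ} (hy : y ∈ insert n I) (hya : a ≤ y) : -(y : ℤ) ≤ ζ a := by
  obtain ⟨lo, hloI, hlo_lt, hlo_max, hi, hhi, hhi_le, hhi_min⟩ := exists_block_bounds han hlo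
  rw [hz.eq_block a ha han lo hloI hlo_lt hlo_max hi hhi hhi_le hhi_min]
  have := hhi_min y hy hya
  omega

theorem apply_lt_of_descent_between (hζ : ζ ∈ SignedPerm n) (hz : IsZeta n I ζ) {a b : ℤ}
    {d : ℕ} (hd : d ∈ I) (ha : 0 ≤ a) (had : a ≤ d) (hdb : (d : ℤ) < b) (hb : b ≤ n) :
    ζ b < ζ a := by
  have hζb := hz.apply_le_neg_succ (by omega) hb hd hdb
  suffices -(d : ℤ) ≤ ζ a by omega
  rcases ha.eq_or_lt with rfl | ha
  · rw [SignedPerm.apply_zero hζ]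
    omega
  by_cases hlo : ∃ i ∈ I, (i : ℤ) < a
  · exact hz.neg_le_apply ha (by omega) hlo (mem_insert_of_mem hd) had
  · push Not at hlo
    rw [hz.eq_self a ha (by omega) hlo]
    omega

theorem apply_lt_apply_succ (hζ : ζ ∈ SignedPerm n) (hz : IsZeta n I ζ) {i : ℕ} (hin : i < n)
    (hiI : i ∉ I) : ζ i < ζ (i + 1) := by
  by_cases hlo : ∃ x ∈ I, (x : ℤ) < i + 1
  · obtain ⟨lo, hloI, hlo_lt, hlo_max, hi, hhi, hhi_le, hhi_min⟩ :=
      exists_block_bounds (n := n) (a := (i : ℤ) + 1) (by omega) hlo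
    have hlo_ne : lo ≠ i := by
      rintro rfl
      exact hiI hloI
    have hlo_lt' : (lo : ℤ) < i := by omega
    have hi_succ : ∀ x ∈ insert n I, (i : ℤ) ≤ x → (i : ℤ) + 1 ≤ x := by
      intro x hx hix
      rcases mem_insert.1 hx with rfl | hx
      · omega
      · exact lt_of_le_of_ne hix (by rintro ⟨⟩; exact hiI hx)
    rw [hz.eq_block _ (by omega) (by omega) lo hloI hlo_lt hlo_max hi hhi hhi_le hhi_min,
      hz.eq_block i (by omega) (by omega) lo hloI hlo_lt'
        (fun x hx hxi => hlo_max x hx (by omega)) hi hhi (by omega)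
        (fun x hx hix => hhi_min x hx (hi_succ x hx hix))]
    omega
  · push Not at hlo
    rw [hz.eq_self _ (by omega) (by omega) hlo]
    rcases Nat.eq_zero_or_pos i with rfl | hi
    · simp [SignedPerm.apply_zero hζ]
    · rw [hz.eq_self i (by omega) (by omega) fun x hx => by have := hlo x hx; omega]
      omega

theorem desSet_eq (hI : I ⊆ range n) (hζ : ζ ∈ SignedPerm n) (hz : IsZeta n I ζ) :
    DesSet n ζ = I := by
  ext i
  rw [DesSet, mem_filter, mem_range]
  refine ⟨fun ⟨hin, hdes⟩ => ?_, fun hi => ⟨mem_range.1 (hI hi), ?_⟩⟩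
  · by_contra hiI
    exact (hz.apply_lt_apply_succ hζ hin hiI).not_gt hdes
  · have := mem_range.1 (hI hi)
    exact hz.apply_lt_of_descent_between hζ hi (Nat.cast_nonneg i) le_rfl (by omega) (by omega)

theorem apply_lt_of_apply_lt (hζ : ζ ∈ SignedPerm n) (hz : IsZeta n I ζ) (hD : DesSet n w ⊆ I)
    {a b : ℤ} (ha : 0 ≤ a) (hab : a ≤ b) (hb : b ≤ n) (hlt : w b < w a) : ζ b < ζ a := by
  obtain ⟨d, hd, had, hdb⟩ := exists_descent_of_apply_lt ha hab hb hlt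
  exact hz.apply_lt_of_descent_between hζ (hD hd) ha had hdb hb

theorem add_neg_of_add_neg (hz : IsZeta n I ζ) (hw : w ∈ SignedPerm n)
    (hD : DesSet n w ⊆ I) {k j : ℤ} (hk : 1 ≤ k) (hkj : k < j) (hj : j ≤ n)
    (hneg : w k + w j < 0) : ζ k + ζ j < 0 := by
  by_cases hlo : ∃ d ∈ I, (d : ℤ) < k
  · obtain ⟨d, hd, hdk⟩ := hlo
    have := hz.apply_le_neg_succ hk (by omega) hd hdk
    have := hz.apply_le_neg_succ (by omega) hj hd (by omega)
    omega
  · push Not at hlo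
    have hwk := le_apply_of_no_descent_lt hw (by omega) (by omega) fun d hd => hlo d (hD hd)
    obtain ⟨d, hd, hkd, hdj⟩ := exists_descent_of_apply_lt (w := w) (by omega) hkj.le hj (by omega)
    have := hz.apply_le_neg_succ (by omega) hj (hD hd) hdj
    rw [hz.eq_self k hk (by omega) hlo]
    omega

theorem invRoots_subset (hζ : ζ ∈ SignedPerm n) (hz : IsZeta n I ζ) (hw : w ∈ SignedPerm n)
    (hD : DesSet n w ⊆ I) : invRoots n w ⊆ invRoots n ζ := by
  rintro ⟨i, j⟩ hp
  obtain ⟨hp, hlt⟩ := mem_invRoots.1 hp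
  refine mem_invRoots.2 ⟨hp, ?_⟩
  obtain ⟨hi, hij, hj, hsum, hi0⟩ := mem_posRoots.1 hp
  dsimp only at *
  rcases lt_or_gt_of_ne hi0 with hi0 | hi0
  · rw [← neg_neg i, SignedPerm.apply_neg hw] at hlt
    rw [← neg_neg i, SignedPerm.apply_neg hζ]
    rcases hsum.eq_or_lt with hsum | hsum
    · obtain rfl : -i = j := by omega
      have := hz.apply_lt_of_apply_lt hζ hD le_rfl (by omega) hj
        (by rw [SignedPerm.apply_zero hw]; omega)
      rw [SignedPerm.apply_zero hζ] at this
      omega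
    · have := hz.add_neg_of_add_neg hw hD (k := -i) (by omega) (by omega) hj (by omega)
      omega
  · exact hz.apply_lt_of_apply_lt hζ hD hi0.le hij.le hj hlt

end IsZeta

/-- For `I ⊆ {0,…,n-1}`, the signed permutation `ζ_I` — which is the
identity below the smallest descent position when `0 ∉ I`, and on each block
`(p_r, p_{r+1}]` determined by consecutive elements `p_r < p_{r+1}` of `I ∪ {n}`
(together with `p_0 = 0` when `0 ∈ I`) takes the increasing negative values
`-p_{r+1}, …, -(p_r+1)`, i.e. `ζ_I(a) = -(p_{r+1} + p_r + 1 - a)` — is the largest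
element of the descent class `Y_I = {w ∈ 𝔅ₙ : Des(w) = I}` in the weak order.
(This covers both cases `0 ∈ I` and `0 ∉ I` of the statement uniformly.) -/
theorem descent_class_greatest (n : ℕ) (I : Finset ℕ) (hI : I ⊆ Finset.range n)
    (ζ : Equiv.Perm ℤ) (hζ : ζ ∈ SignedPerm n)
    (hval1 : ∀ a : ℤ, 1 ≤ a → a ≤ (n : ℤ) → (∀ i ∈ I, a ≤ (i : ℤ)) → ζ a = a)
    (hval2 : ∀ a : ℤ, 1 ≤ a → a ≤ (n : ℤ) →
      ∀ lo ∈ I, (lo : ℤ) < a → (∀ i ∈ I, (i : ℤ) < a → i ≤ lo) →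
      ∀ hi ∈ insert n I, a ≤ (hi : ℤ) → (∀ i ∈ insert n I, a ≤ (i : ℤ) → hi ≤ i) →
      ζ a = -(((hi : ℤ) + (lo : ℤ) + 1) - a)) :
    DesSet n ζ = I ∧ ∀ w ∈ SignedPerm n, DesSet n w = I → wle n w ζ := by
  have hz : IsZeta n I ζ := ⟨hval1, hval2⟩
  exact ⟨hz.desSet_eq hI hζ, fun w hw hD =>
    wle_of_invRoots_subset hw hζ (hz.invRoots_subset hζ hw hD.subset)⟩
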